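/- arXiv:2201.06626 — 4 statements merged into one kernel-verified Lean document; each statement's English description precedes it below -/
import Mathlib

section
/- Let Θ = ⟨V, c, C, d⟩ be an AH-polytope in ℝⁿ, let G be a p×n real matrix and g ∈ ℝᵖ, and let H = {x ∈ ℝⁿ | Gx ≤ g} (entrywise). Then ⟦Θ⟧ ∩ H equals the set represented by the AH-polytope Θ' = ⟨V', c', C', d'⟩ with V' = V, c' = c, C' the vertical stacking of C and GV, and d' the vertical stacking of d and g − Gc. -/
/-- The set represented by an AH-polytope `⟨V, c, C, d⟩`:
`{x ∈ ℝⁿ | ∃ α ∈ ℝᵐ, x = Vα + c ∧ Cα ≤ d}` (entrywise inequality). -/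
def ahSet {n m : ℕ} {κ : Type*} (V : Matrix (Fin n) (Fin m) ℝ) (c : Fin n → ℝ)
    (C : Matrix κ (Fin m) ℝ) (d : κ → ℝ) : Set (Fin n → ℝ) :=
  {x | ∃ α : Fin m → ℝ, x = V.mulVec α + c ∧ ∀ i, C.mulVec α i ≤ d i}

open Matrix

theorem Matrix.mulVec_affine_le_iff {ι ν μ R : Type*} [Fintype ν] [Fintype μ]
    [CommRing R] [PartialOrder R] [IsOrderedAddMonoid R]
    (G : Matrix ι ν R) (g : ι → R) (V : Matrix ν μ R) (c : ν → R) (α : μ → R) :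
    G *ᵥ (V *ᵥ α + c) ≤ g ↔ (G * V) *ᵥ α ≤ g - G *ᵥ c := by
  rw [mulVec_add, mulVec_mulVec, le_sub_iff_add_le]

theorem mem_ahSet_fromRows {n m : ℕ} {κ κ' : Type*} (V : Matrix (Fin n) (Fin m) ℝ)
    (c : Fin n → ℝ) (C : Matrix κ (Fin m) ℝ) (C' : Matrix κ' (Fin m) ℝ) (d : κ → ℝ)
    (d' : κ' → ℝ) (x : Fin n → ℝ) :
    x ∈ ahSet V c (fromRows C C') (Sum.elim d d') ↔
      ∃ α, x = V *ᵥ α + c ∧ C *ᵥ α ≤ d ∧ C' *ᵥ α ≤ d' := by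
  simp only [ahSet, Set.mem_ofPred_eq, fromRows_mulVec, Sum.forall, Sum.elim_inl, Sum.elim_inr,
    Pi.le_def]

/-- Intersection of an AH-polytope with a half-space `{x | Gx ≤ g}`: it is the AH-polytope
`⟨V, c, [C; GV], [d; g − Gc]⟩`, where the constraint matrix and offset are stacked vertically. -/
theorem ahSet_inter_halfspace {n m k p : ℕ}
    (V : Matrix (Fin n) (Fin m) ℝ) (c : Fin n → ℝ)
    (C : Matrix (Fin k) (Fin m) ℝ) (d : Fin k → ℝ)
    (G : Matrix (Fin p) (Fin n) ℝ) (g : Fin p → ℝ) :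
    ahSet V c C d ∩ {x | ∀ i, G.mulVec x i ≤ g i}
      = ahSet V c (Matrix.fromRows C (G * V)) (Sum.elim d (g - G.mulVec c)) := by
  ext x
  rw [mem_ahSet_fromRows]
  simp only [ahSet, Set.mem_inter_iff, Set.mem_ofPred_eq, ← Pi.le_def]
  constructor
  · rintro ⟨⟨α, rfl, hC⟩, hG⟩
    exact ⟨α, rfl, hC, (mulVec_affine_le_iff G g V c α).1 hG⟩
  · rintro ⟨α, rfl, hC, hG⟩
    exact ⟨⟨α, rfl, hC⟩, (mulVec_affine_le_iff G g V c α).2 hG⟩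
end

section
/- Let A be an n×n real matrix, t ∈ ℝ, and Θ = ⟨V, c, C, d⟩ an AH-polytope in ℝⁿ. Then the time-t reachable set of the linear system ẋ = Ax from the initial set ⟦Θ⟧, namely the set {φ(t) | φ : ℝ → ℝⁿ, φ(0) ∈ ⟦Θ⟧, and φ'(s) = Aφ(s) for all s}, equals the set represented by the AH-polytope ⟨e^{tA}V, e^{tA}c, C, d⟩, where e^{tA} is the matrix exponential of tA. -/
/-!
`u ↦ e^{uA} x₀` solves `ẋ = Ax`, and since `x ↦ Ax` is Lipschitz it is the only solution with
initial value `x₀`. Hence the time-`t` reachable set is the image of `⟦Θ⟧` under `e^{tA}`, and a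
linear map `M` sends `⟦⟨V, c, C, d⟩⟧` to `⟦⟨MV, Mc, C, d⟩⟧` because `M(Vα + c) = (MV)α + Mc`
with the constraint `Cα ≤ d` on `α` untouched.
-/

open scoped Matrix
open NormedSpace (exp)

open scoped Matrix.Norms.Operator in
theorem HasDerivAt.matrix_mulVec_const {m n : Type*} [Fintype m] [Fintype n]
    {M : ℝ → Matrix m n ℝ} {M' : Matrix m n ℝ} {s : ℝ} (hM : HasDerivAt M M' s) (x : n → ℝ) :
    HasDerivAt (fun u => M u *ᵥ x) (M' *ᵥ x) s :=
  (LinearMap.toContinuousLinearMap ((Matrix.mulVecBilin ℝ ℝ).flip x)).hasFDerivAt.comp_hasDerivAt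
    (f := M) s hM

namespace Matrix

variable {ι : Type*} [Fintype ι] [DecidableEq ι]

theorem hasDerivAt_exp_smul_mulVec (A : Matrix ι ι ℝ) (x : ι → ℝ) (s : ℝ) :
    HasDerivAt (fun u : ℝ => exp (u • A) *ᵥ x) (A *ᵥ (exp (s • A) *ᵥ x)) s := by
  open scoped Matrix.Norms.Operator in
  exact mulVec_mulVec x A (exp (s • A)) ▸ (hasDerivAt_exp_smul_const' A s).matrix_mulVec_const x

theorem eq_exp_smul_mulVec_of_hasDerivAt {A : Matrix ι ι ℝ} {φ : ℝ → ι → ℝ}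
    (hφ : ∀ s, HasDerivAt φ (A *ᵥ φ s) s) (t : ℝ) :
    φ t = exp (t • A) *ᵥ φ 0 := by
  have hA : LipschitzWith _ (A *ᵥ · : (ι → ℝ) → ι → ℝ) :=
    (LinearMap.toContinuousLinearMap A.mulVecLin).lipschitz
  have hφ_eq := ODE_solution_unique_univ (v := fun _ => (A *ᵥ ·)) (s := fun _ => Set.univ)
    (t₀ := 0) (fun _ => hA.lipschitzOnWith) (fun s => ⟨hφ s, trivial⟩)
    (fun s => ⟨A.hasDerivAt_exp_smul_mulVec (φ 0) s, trivial⟩) (by simp)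
  exact congrFun hφ_eq t

theorem linear_ode_reachable_eq_image (A : Matrix ι ι ℝ) (t : ℝ) (S : Set (ι → ℝ)) :
    {x | ∃ φ : ℝ → ι → ℝ, φ 0 ∈ S ∧ (∀ s, HasDerivAt φ (A *ᵥ φ s) s) ∧ φ t = x}
      = (exp (t • A) *ᵥ ·) '' S := by
  ext x
  constructor
  · rintro ⟨φ, hφ₀, hφ, rfl⟩
    exact ⟨φ 0, hφ₀, (eq_exp_smul_mulVec_of_hasDerivAt hφ t).symm⟩
  · rintro ⟨x₀, hx₀, rfl⟩
    refine ⟨fun u => exp (u • A) *ᵥ x₀, ?_, A.hasDerivAt_exp_smul_mulVec x₀, rfl⟩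
    simpa using hx₀

end Matrix

theorem image_mulVec_ahSet {p n m : ℕ} {κ : Type*} (M : Matrix (Fin p) (Fin n) ℝ)
    (V : Matrix (Fin n) (Fin m) ℝ) (c : Fin n → ℝ) (C : Matrix κ (Fin m) ℝ) (d : κ → ℝ) :
    (M *ᵥ ·) '' ahSet V c C d = ahSet (M * V) (M *ᵥ c) C d := by
  have hM (α : Fin m → ℝ) : M *ᵥ (V *ᵥ α + c) = (M * V) *ᵥ α + M *ᵥ c := by
    rw [Matrix.mulVec_add, Matrix.mulVec_mulVec]
  ext x
  constructor
  · rintro ⟨_, ⟨α, rfl, hα⟩, rfl⟩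
    exact ⟨α, hM α, hα⟩
  · rintro ⟨α, rfl, hα⟩
    exact ⟨_, ⟨α, rfl, hα⟩, hM α⟩

/-- Discrete-time reachability of a linear system `ẋ = Ax` over a time step `t` from an
AH-polytope initial set: the time-`t` reachable set is the AH-polytope
`⟨e^{tA}V, e^{tA}c, C, d⟩`. -/
theorem ahSet_linear_ode_reach {n m k : ℕ}
    (A : Matrix (Fin n) (Fin n) ℝ) (t : ℝ)
    (V : Matrix (Fin n) (Fin m) ℝ) (c : Fin n → ℝ)
    (C : Matrix (Fin k) (Fin m) ℝ) (d : Fin k → ℝ) :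
    {x : Fin n → ℝ | ∃ φ : ℝ → (Fin n → ℝ),
        φ 0 ∈ ahSet V c C d ∧ (∀ s : ℝ, HasDerivAt φ (A.mulVec (φ s)) s) ∧ φ t = x}
      = ahSet (NormedSpace.exp (t • A) * V) ((NormedSpace.exp (t • A)).mulVec c) C d := by
  rw [A.linear_ode_reachable_eq_image, image_mulVec_ahSet]
end

section
/- Let c ≠ 0 be real and let A be the 4×4 real matrix with rows (0,0,1,0), (0,0,0,1), (0,0,0,−c), (0,0,c,0). Then for all real t, the matrix exponential e^{tA} equals the 4×4 matrix with rows (1, 0, sin(ct)/c, −(1−cos(ct))/c), (0, 1, (1−cos(ct))/c, sin(ct)/c), (0, 0, cos(ct), −sin(ct)), (0, 0, sin(ct), cos(ct)). -/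
/-!
In 2×2 blocks the matrix is `A = [[0, 1], [0, c J]]` with `J = [[0, -1], [1, 0]]`. Since `c J` is
invertible for `c ≠ 0`, the shear `P = [[1, (c J)⁻¹], [0, 1]]` conjugates the
block-diagonal `diag(0, c J)` into `A`, so `e^{tA} = [[1, (c J)⁻¹ (e^{tcJ} - 1)], [0, e^{tcJ}]]`.
Finally `J` is the matrix of multiplication by `i` on `ℂ ≅ ℝ²`, so `e^{θJ}` is the matrix of
multiplication by `e^{iθ}`, the rotation by `θ`.
-/

open NormedSpace Matrix

namespace Matrix

variable {m n 𝕜 : Type*} [Fintype m] [DecidableEq m] [Fintype n] [DecidableEq n]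

def fromBlocksDiagonalRingHom [Semiring 𝕜] :
    Matrix m m 𝕜 × Matrix n n 𝕜 →+* Matrix (m ⊕ n) (m ⊕ n) 𝕜 where
  toFun p := fromBlocks p.1 0 0 p.2
  map_one' := fromBlocks_one
  map_mul' p q := by simp [fromBlocks_multiply]
  map_zero' := fromBlocks_zero
  map_add' p q := by simp [fromBlocks_add]

variable [RCLike 𝕜]

theorem exp_fromBlocks_diagonal (A : Matrix m m 𝕜) (D : Matrix n n 𝕜) :
    exp (fromBlocks A 0 0 D) = fromBlocks (exp A) 0 0 (exp D) := by
  have hcont : Continuous (fromBlocksDiagonalRingHom : Matrix m m 𝕜 × Matrix n n 𝕜 →+* _) :=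
    continuous_fst.matrix_fromBlocks continuous_const continuous_const continuous_snd
  open scoped Norms.Operator in
  · -- For the operator norms the product uniformity is not reducibly the product of the
    -- uniformities of the factors, so instance search does not find completeness by itself.
    have : @CompleteSpace (Matrix m m 𝕜 × Matrix n n 𝕜) PseudoMetricSpace.toUniformSpace :=
      FiniteDimensional.complete 𝕜 _
    exact (map_exp _ hcont (A, D)).symm.trans
      (congrArg₂ (fromBlocks · 0 0 ·) (Prod.fst_exp _) (Prod.snd_exp _))

theorem exp_reindex (e : m ≃ n) (A : Matrix m m 𝕜) :
    exp (reindex e e A) = reindex e e (exp A) := by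
  open scoped Norms.Operator in
  exact (map_exp (reindexAlgEquiv ℚ 𝕜 e) (continuous_id.matrix_reindex e e) A).symm

theorem exp_smul_fromBlocks_zero_one_zero {B : Matrix n n 𝕜} (hB : IsUnit B) (t : 𝕜) :
    exp (t • fromBlocks 0 (1 : Matrix n n 𝕜) 0 B) =
      fromBlocks (1 : Matrix n n 𝕜) (B⁻¹ * (exp (t • B) - 1)) 0 (exp (t • B)) := by
  set P : Matrix (n ⊕ n) (n ⊕ n) 𝕜 := fromBlocks 1 B⁻¹ 0 1
  have hleftInv : fromBlocks 1 (-B⁻¹) 0 (1 : Matrix n n 𝕜) * P = 1 := by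
    simp [P, fromBlocks_multiply]
  have hP : IsUnit P := (isUnit_iff_isUnit_det P).mpr (isUnit_det_of_left_inverse hleftInv)
  have hconj : t • fromBlocks 0 (1 : Matrix n n 𝕜) 0 B = P * fromBlocks 0 0 0 (t • B) * P⁻¹ := by
    simp [P, inv_eq_left_inv hleftInv, fromBlocks_multiply, fromBlocks_smul,
      nonsing_inv_mul _ ((isUnit_iff_isUnit_det B).mp hB)]
  rw [hconj, exp_conj _ _ hP, exp_fromBlocks_diagonal, exp_zero, inv_eq_left_inv hleftInv]
  simp [P, fromBlocks_multiply, mul_sub, neg_add_eq_sub]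

end Matrix

theorem exp_smul_rotationGenerator (θ : ℝ) :
    exp (θ • !![0, -1; 1, 0] : Matrix (Fin 2) (Fin 2) ℝ) =
      !![Real.cos θ, -Real.sin θ; Real.sin θ, Real.cos θ] := by
  let φ := Algebra.leftMulMatrix Complex.basisOneI
  have hcont : Continuous φ := φ.toLinearMap.continuous_of_finiteDimensional
  have hgen : φ (θ * Complex.I) = θ • !![0, -1; 1, 0] := by
    rw [Algebra.leftMulMatrix_complex]
    ext i j
    fin_cases i <;> fin_cases j <;> simp
  rw [← hgen]
  open scoped Norms.Operator in
  refine (map_exp φ hcont _).symm.trans ?_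
  rw [← Complex.exp_eq_exp_ℂ, Algebra.leftMulMatrix_complex, Complex.exp_mul_I]
  simp [← Complex.ofReal_cos, ← Complex.ofReal_sin]

/-- The matrix exponential of the ownship turn-dynamics block: for `c ≠ 0` and
`A = [[0,0,1,0],[0,0,0,1],[0,0,0,−c],[0,0,c,0]]`,
`e^{tA} = [[1,0,sin(ct)/c,−(1−cos(ct))/c],[0,1,(1−cos(ct))/c,sin(ct)/c],
[0,0,cos(ct),−sin(ct)],[0,0,sin(ct),cos(ct)]]`. -/
theorem exp_turn_dynamics (c : ℝ) (hc : c ≠ 0) (t : ℝ) :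
    NormedSpace.exp
        (t • (!![0, 0, 1, 0;
                 0, 0, 0, 1;
                 0, 0, 0, -c;
                 0, 0, c, 0] : Matrix (Fin 4) (Fin 4) ℝ))
      = !![1, 0, Real.sin (c * t) / c, -((1 - Real.cos (c * t)) / c);
           0, 1, (1 - Real.cos (c * t)) / c, Real.sin (c * t) / c;
           0, 0, Real.cos (c * t), -Real.sin (c * t);
           0, 0, Real.sin (c * t), Real.cos (c * t)] := by
  set J : Matrix (Fin 2) (Fin 2) ℝ := !![0, -1; 1, 0]
  have hblocks : t • (!![0, 0, 1, 0; 0, 0, 0, 1; 0, 0, 0, -c; 0, 0, c, 0] : Matrix (Fin 4) (Fin 4) ℝ)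
      = reindex finSumFinEquiv finSumFinEquiv (t • fromBlocks 0 1 0 (c • J)) := by
    ext i j
    fin_cases i <;> fin_cases j <;> simp [J, finSumFinEquiv, Fin.addCases]
  have hunit : IsUnit (c • J) := (isUnit_iff_isUnit_det _).mpr (by simp [J, hc])
  have hinv : (c • J)⁻¹ = c⁻¹ • !![0, 1; -1, 0] := inv_eq_left_inv <| by
    ext i j
    fin_cases i <;> fin_cases j <;> simp [J, hc]
  rw [hblocks, exp_reindex, exp_smul_fromBlocks_zero_one_zero hunit, smul_smul, mul_comm t c,
    exp_smul_rotationGenerator, hinv]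
  ext i j
  fin_cases i <;> fin_cases j <;>
    simp [finSumFinEquiv, Fin.addCases, div_eq_inv_mul, mul_sub, neg_add_eq_sub]
end

section
/- Let 0 ≤ v_min ≤ v_max and let θ_lb < θ_ub be real numbers with θ_ub − θ_lb < π. Define the points a = v_min·(cos θ_lb, sin θ_lb), b = v_min·(cos θ_ub, sin θ_ub), c = v_max·(cos θ_lb, sin θ_lb), d = v_max·(cos θ_ub, sin θ_ub), θ_mid = (θ_lb + θ_ub)/2, and e = (v_max / cos((θ_ub − θ_lb)/2))·(cos θ_mid, sin θ_mid). Then for every v ∈ [v_min, v_max] and every θ ∈ [θ_lb, θ_ub], the point (v·cos θ, v·sin θ) lies in the convex hull of {a, b, c, d, e}. -/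
/-!
With `u φ = (cos φ, sin φ)`, the identity
`sin (β - α) • u θ = sin (β - θ) • u α + sin (θ - α) • u β`
locates the point where the ray of direction `θ` crosses a segment joining a point of the ray `α`
to a point of the ray `β`. On the chord `[a, b]` this point has radius at most `v_min`, since the
sine is subadditive on `[0, π]`. On the tangent segment `[c, e]` (for `θ` below the bisector) it
has radius `v_max / cos (θ - θ_lb) ≥ v_max`, and symmetrically on `[e, d]`. The hull is convex,
so it contains the whole radial segment between these two crossings, hence `v • u θ`.
-/

open Real
open scoped Pointwise

noncomputable def unitVec (φ : ℝ) : Fin 2 → ℝ := ![cos φ, sin φ]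

lemma smul_unitVec (r φ : ℝ) : r • unitVec φ = ![r * cos φ, r * sin φ] := by
  ext i; fin_cases i <;> simp [unitVec]

lemma sin_sub_smul_unitVec (α β θ : ℝ) :
    sin (β - α) • unitVec θ = sin (β - θ) • unitVec α + sin (θ - α) • unitVec β := by
  ext i; fin_cases i <;> simp [unitVec, sin_sub] <;> ring

lemma smul_unitVec_mem_segment {r s t α β θ : ℝ} (hr : 0 ≤ r) (hs : 0 ≤ s)
    (hα : 0 ≤ sin (θ - α)) (hβ : 0 ≤ sin (β - θ))
    (hD : 0 < s * sin (β - θ) + r * sin (θ - α))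
    (ht : t * (s * sin (β - θ) + r * sin (θ - α)) = r * s * sin (β - α)) :
    t • unitVec θ ∈ segment ℝ (r • unitVec α) (s • unitVec β) := by
  set D := s * sin (β - θ) + r * sin (θ - α)
  refine ⟨s * sin (β - θ) / D, r * sin (θ - α) / D, by positivity, by positivity,
    by rw [← add_div, div_self hD.ne'], ?_⟩
  calc (s * sin (β - θ) / D) • r • unitVec α + (r * sin (θ - α) / D) • s • unitVec β
      = (r * s / D) • (sin (β - θ) • unitVec α + sin (θ - α) • unitVec β) := by module
    _ = t • unitVec θ := by
      rw [← sin_sub_smul_unitVec, smul_smul, eq_div_of_mul_eq hD.ne' ht]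
      congr 1; ring

lemma sin_add_le_sin_add_sin {x y : ℝ} (hx : 0 ≤ sin x) (hy : 0 ≤ sin y) :
    sin (x + y) ≤ sin x + sin y := by
  rw [sin_add]; nlinarith [cos_le_one x, cos_le_one y]

lemma exists_le_one_smul_unitVec_mem_segment {α β θ : ℝ} (hαθ : α ≤ θ) (hθβ : θ ≤ β)
    (hαβ : α < β) (hβα : β - α < π) :
    ∃ t : ℝ, t ≤ 1 ∧ t • unitVec θ ∈ segment ℝ (unitVec α) (unitVec β) := by
  have hα : 0 ≤ sin (θ - α) := sin_nonneg_of_nonneg_of_le_pi (by linarith) (by linarith)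
  have hβ : 0 ≤ sin (β - θ) := sin_nonneg_of_nonneg_of_le_pi (by linarith) (by linarith)
  have hsub : sin (β - α) ≤ sin (β - θ) + sin (θ - α) := by
    simpa using sin_add_le_sin_add_sin hβ hα
  have hD : 0 < sin (β - θ) + sin (θ - α) :=
    (sin_pos_of_pos_of_lt_pi (sub_pos.2 hαβ) hβα).trans_le hsub
  refine ⟨sin (β - α) / (sin (β - θ) + sin (θ - α)), (div_le_one hD).2 hsub, ?_⟩
  simpa using smul_unitVec_mem_segment zero_le_one zero_le_one hα hβ (by simpa using hD)
    (by simp only [one_mul]; field_simp)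

lemma inv_cos_smul_unitVec_mem_segment_left {α θ m : ℝ} (hαθ : α ≤ θ) (hθm : θ ≤ m)
    (hαm : α < m) (hmα : m - α < π / 2) :
    (cos (θ - α))⁻¹ • unitVec θ ∈ segment ℝ (unitVec α) ((cos (m - α))⁻¹ • unitVec m) := by
  have hα : 0 ≤ sin (θ - α) := sin_nonneg_of_nonneg_of_le_pi (by linarith) (by linarith)
  have hm : 0 ≤ sin (m - θ) := sin_nonneg_of_nonneg_of_le_pi (by linarith) (by linarith)
  have hcθ : 0 < cos (θ - α) := cos_pos_of_mem_Ioo ⟨by linarith, by linarith⟩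
  have hcm : 0 < cos (m - α) := cos_pos_of_mem_Ioo ⟨by linarith, by linarith⟩
  have hsm : 0 < sin (m - α) := sin_pos_of_pos_of_lt_pi (by linarith) (by linarith)
  have key : sin (m - θ) = sin (m - α) * cos (θ - α) - cos (m - α) * sin (θ - α) := by
    rw [← sin_sub]; congr 1; ring
  have hD : (cos (m - α))⁻¹ * sin (m - θ) + 1 * sin (θ - α)
      = sin (m - α) * cos (θ - α) / cos (m - α) := by
    rw [key]; field_simp; ring
  simpa using smul_unitVec_mem_segment zero_le_one (by positivity) hα hm
    (hD ▸ by positivity) (by rw [hD]; field_simp)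

lemma inv_cos_smul_unitVec_mem_segment_right {β θ m : ℝ} (hmθ : m ≤ θ) (hθβ : θ ≤ β)
    (hmβ : m < β) (hβm : β - m < π / 2) :
    (cos (β - θ))⁻¹ • unitVec θ ∈ segment ℝ ((cos (β - m))⁻¹ • unitVec m) (unitVec β) := by
  have hm : 0 ≤ sin (θ - m) := sin_nonneg_of_nonneg_of_le_pi (by linarith) (by linarith)
  have hβ : 0 ≤ sin (β - θ) := sin_nonneg_of_nonneg_of_le_pi (by linarith) (by linarith)
  have hcθ : 0 < cos (β - θ) := cos_pos_of_mem_Ioo ⟨by linarith, by linarith⟩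
  have hcm : 0 < cos (β - m) := cos_pos_of_mem_Ioo ⟨by linarith, by linarith⟩
  have hsm : 0 < sin (β - m) := sin_pos_of_pos_of_lt_pi (by linarith) (by linarith)
  have key : sin (θ - m) = sin (β - m) * cos (β - θ) - cos (β - m) * sin (β - θ) := by
    rw [← sin_sub]; congr 1; ring
  have hD : 1 * sin (β - θ) + (cos (β - m))⁻¹ * sin (θ - m)
      = sin (β - m) * cos (β - θ) / cos (β - m) := by
    rw [key]; field_simp; ring
  simpa using smul_unitVec_mem_segment (by positivity) zero_le_one hm hβ
    (hD ▸ by positivity) (by rw [hD]; field_simp)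

lemma exists_one_le_smul_unitVec_mem_convexHull {α β θ : ℝ} (hαθ : α ≤ θ) (hθβ : θ ≤ β)
    (hαβ : α < β) (hβα : β - α < π) :
    ∃ t : ℝ, 1 ≤ t ∧ t • unitVec θ ∈ convexHull ℝ
      {unitVec α, unitVec β, (cos ((β - α) / 2))⁻¹ • unitVec ((α + β) / 2)} := by
  have hm₁ : (α + β) / 2 - α = (β - α) / 2 := by ring
  have hm₂ : β - (α + β) / 2 = (β - α) / 2 := by ring
  rcases le_total θ ((α + β) / 2) with hθm | hmθ
  · have h := inv_cos_smul_unitVec_mem_segment_left hαθ hθm (by linarith) (by linarith)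
    rw [hm₁] at h
    refine ⟨(cos (θ - α))⁻¹, ?_, segment_subset_convexHull (by simp) (by simp) h⟩
    exact (one_le_inv₀ (cos_pos_of_mem_Ioo ⟨by linarith, by linarith⟩)).2 (cos_le_one _)
  · have h := inv_cos_smul_unitVec_mem_segment_right hmθ hθβ (by linarith) (by linarith)
    rw [hm₂] at h
    refine ⟨(cos (β - θ))⁻¹, ?_, segment_subset_convexHull (by simp) (by simp) h⟩
    exact (one_le_inv₀ (cos_pos_of_mem_Ioo ⟨by linarith, by linarith⟩)).2 (cos_le_one _)

lemma Convex.smul_mem_of_mem_Icc {𝕜 E : Type*} [Field 𝕜] [LinearOrder 𝕜]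
    [IsStrictOrderedRing 𝕜] [AddCommGroup E] [Module 𝕜 E] {K : Set E}
    (hK : Convex 𝕜 K) {x : E} {a b t : 𝕜} (ha : a • x ∈ K) (hb : b • x ∈ K)
    (ht : t ∈ Set.Icc a b) : t • x ∈ K :=
  (convex_iff_ordConnected.1 (hK.linear_preimage (LinearMap.id.smulRight x))).out ha hb ht

lemma smul_mem_convexHull_of_smul_subset {𝕜 E : Type*} [CommSemiring 𝕜] [PartialOrder 𝕜]
    [AddCommMonoid E] [Module 𝕜 E] {S T : Set E} {c : 𝕜} {x : E} (hx : x ∈ convexHull 𝕜 T)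
    (hTS : c • T ⊆ S) : c • x ∈ convexHull 𝕜 S :=
  convexHull_mono hTS (convexHull_smul c T ▸ Set.smul_mem_smul_set hx)

/-- Covering the annular sector of velocity vectors by five points: every vector
`(v·cos θ, v·sin θ)` with speed `v ∈ [v_min, v_max]` and heading `θ ∈ [θ_lb, θ_ub]`
(with `θ_ub − θ_lb < π`) lies in the convex hull of the points `a, b, c, d, e`, where
`a, b` are at the extreme angles and minimum speed, `c, d` at the extreme angles and
maximum speed, and `e` is the intersection of the tangent lines to the maximum-speed
circle at `c` and `d`. -/
theorem velocity_sector_convex_cover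
    (vmin vmax θlb θub : ℝ)
    (hv0 : 0 ≤ vmin) (hv : vmin ≤ vmax)
    (hθ : θlb < θub) (hθπ : θub - θlb < Real.pi) :
    ∀ v θ : ℝ, v ∈ Set.Icc vmin vmax → θ ∈ Set.Icc θlb θub →
      (![v * Real.cos θ, v * Real.sin θ] : Fin 2 → ℝ) ∈
        convexHull ℝ
          ({![vmin * Real.cos θlb, vmin * Real.sin θlb],
            ![vmin * Real.cos θub, vmin * Real.sin θub],
            ![vmax * Real.cos θlb, vmax * Real.sin θlb],
            ![vmax * Real.cos θub, vmax * Real.sin θub],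
            ![(vmax / Real.cos ((θub - θlb) / 2)) * Real.cos ((θlb + θub) / 2),
              (vmax / Real.cos ((θub - θlb) / 2)) * Real.sin ((θlb + θub) / 2)]} :
            Set (Fin 2 → ℝ)) := by
  rintro v θ ⟨hv₁, hv₂⟩ ⟨hθ₁, hθ₂⟩
  obtain ⟨t₁, ht₁, h₁⟩ := exists_le_one_smul_unitVec_mem_segment hθ₁ hθ₂ hθ hθπ
  obtain ⟨t₂, ht₂, h₂⟩ := exists_one_le_smul_unitVec_mem_convexHull hθ₁ hθ₂ hθ hθπ
  simp only [← smul_unitVec]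
  refine (convex_convexHull ℝ _).smul_mem_of_mem_Icc (a := vmin * t₁) (b := vmax * t₂) ?_ ?_
    ⟨(mul_le_of_le_one_right hv0 ht₁).trans hv₁,
      hv₂.trans (le_mul_of_one_le_right (hv0.trans hv) ht₂)⟩
  · rw [mul_smul]
    refine smul_mem_convexHull_of_smul_subset (by rwa [convexHull_pair]) ?_
    simp [Set.smul_set_insert, Set.insert_subset_iff]
  · rw [mul_smul]
    refine smul_mem_convexHull_of_smul_subset h₂ ?_
    simp [Set.smul_set_insert, Set.insert_subset_iff, smul_smul, div_eq_mul_inv]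
end
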